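/- arXiv:2603.03925 — 2 statements merged into one kernel-verified Lean document; each statement's English description precedes it below -/
import Mathlib

section
/- Any two purifications of the same density operator on a system AB, with purifying systems E' and E where dim E' ≤ dim E, are related by an isometry acting only on the purifying system: there exists an isometry V : E' → E with (1_{AB} ⊗ V)|ψ⟩_{ABE'} = |τ⟩_{ABE}. -/
open Matrix Finset

/-- Any two purifications of the same density operator on `AB`, with purifying systems
`E'` and `E` of dimensions `dim E' ≤ dim E`, are related by an isometry `V : E' → E`
acting only on the purifying system: `(1_{AB} ⊗ V)|ψ⟩_{ABE'} = |τ⟩_{ABE}`. -/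
theorem purifications_related_by_isometry
    {ιAB E' E : Type*} [Fintype ιAB] [Fintype E'] [DecidableEq E'] [Fintype E]
    (ψ : ιAB × E' → ℂ) (τ : ιAB × E → ℂ)
    (hψ : ∑ p, star (ψ p) * ψ p = 1) (hτ : ∑ p, star (τ p) * τ p = 1)
    (hmarg : ∀ a b : ιAB,
      (∑ e : E', ψ (a, e) * star (ψ (b, e))) = ∑ e : E, τ (a, e) * star (τ (b, e)))
    (hdim : Fintype.card E' ≤ Fintype.card E) :
    ∃ V : Matrix E E' ℂ, Vᴴ * V = 1 ∧
      ∀ (a : ιAB) (e : E), (∑ e' : E', V e e' * ψ (a, e')) = τ (a, e) := by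
  classical
  obtain ⟨ι⟩ : Nonempty (E' ↪ E) := Function.Embedding.nonempty_iff_card_le.mpr hdim
  -- embedding of the smaller Euclidean space into the bigger one
  let J : EuclideanSpace ℂ E' →ₗ[ℂ] EuclideanSpace ℂ E :=
    { toFun := fun v => WithLp.toLp 2 (fun e => ∑ e' : E', if ι e' = e then v e' else 0)
      map_add' := by
        intro v w; ext e
        show (∑ e' : E', if ι e' = e then (v + w) e' else 0)
          = (∑ e' : E', if ι e' = e then v e' else 0)
            + (∑ e' : E', if ι e' = e then w e' else 0)
        rw [← Finset.sum_add_distrib]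
        refine Finset.sum_congr rfl fun e' _ => ?_
        split_ifs <;> simp
      map_smul' := by
        intro c v; ext e
        show (∑ e' : E', if ι e' = e then (c • v) e' else 0)
          = c * ∑ e' : E', if ι e' = e then v e' else 0
        rw [Finset.mul_sum]
        refine Finset.sum_congr rfl fun e' _ => ?_
        split_ifs <;> simp }
  have hJapp : ∀ (v : EuclideanSpace ℂ E') (e : E),
      J v e = ∑ e' : E', if ι e' = e then v e' else 0 := fun _ _ => rfl
  have hJ : ∀ v w : EuclideanSpace ℂ E', inner ℂ (J v) (J w) = (inner ℂ v w : ℂ) := by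
    intro v w
    simp only [PiLp.inner_apply, RCLike.inner_apply, mul_comm _ ((starRingEnd ℂ) _)]
    simp only [hJapp]
    have : ∀ e : E, (starRingEnd ℂ) (∑ e' : E', if ι e' = e then v e' else 0)
        * (∑ e' : E', if ι e' = e then w e' else 0)
        = ∑ e1 : E', ∑ e2 : E', if ι e1 = e ∧ ι e2 = e
            then (starRingEnd ℂ) (v e1) * w e2 else 0 := by
      intro e
      rw [map_sum, Finset.sum_mul_sum]
      refine Finset.sum_congr rfl fun e1 _ => Finset.sum_congr rfl fun e2 _ => ?_
      split_ifs with h1 h2 h2 <;> simp_all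
    rw [Finset.sum_congr rfl fun e _ => this e]
    rw [Finset.sum_comm]
    refine Finset.sum_congr rfl fun e1 _ => ?_
    rw [Finset.sum_comm]
    have : ∀ e2 : E', (∑ e : E, if ι e1 = e ∧ ι e2 = e
        then (starRingEnd ℂ) (v e1) * w e2 else 0)
        = if e1 = e2 then (starRingEnd ℂ) (v e1) * w e2 else 0 := by
      intro e2
      by_cases h : e1 = e2
      · subst h
        simp [Finset.sum_ite_eq' Finset.univ (ι e1)]
      · have : ∀ e : E, ¬(ι e1 = e ∧ ι e2 = e) := by
          rintro e ⟨h1, h2⟩; exact h (ι.injective (h1.trans h2.symm))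
        simp [this, h]
    rw [Finset.sum_congr rfl fun e2 _ => this e2]
    simp
  -- the two families of vectors
  let ψv : ιAB → EuclideanSpace ℂ E' := fun a => (WithLp.toLp 2 (fun e' => ψ (a, e')) : EuclideanSpace ℂ E')
  let x : ιAB → EuclideanSpace ℂ E := fun a => J (ψv a)
  let y : ιAB → EuclideanSpace ℂ E := fun a => (WithLp.toLp 2 (fun e => τ (a, e)) : EuclideanSpace ℂ E)
  have hgram : ∀ a b : ιAB, (inner ℂ (x a) (x b) : ℂ) = inner ℂ (y a) (y b) := by
    intro a b
    have h := congrArg star (hmarg a b)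
    simp only [star_sum, star_mul', star_star] at h
    calc (inner ℂ (x a) (x b) : ℂ)
        = inner ℂ (ψv a) (ψv b) := hJ _ _
      _ = ∑ e' : E', star (ψ (a, e')) * ψ (b, e') := by
          simp only [PiLp.inner_apply, RCLike.inner_apply, starRingEnd_apply, mul_comm _ (star _), ψv]
      _ = ∑ e : E, star (τ (a, e)) * τ (b, e) := h
      _ = inner ℂ (y a) (y b) := by
          simp only [PiLp.inner_apply, RCLike.inner_apply, starRingEnd_apply, mul_comm _ (star _), y]
  -- linear combination maps
  let Φ : (ιAB → ℂ) →ₗ[ℂ] EuclideanSpace ℂ E := Fintype.linearCombination ℂ x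
  let Ψ : (ιAB → ℂ) →ₗ[ℂ] EuclideanSpace ℂ E := Fintype.linearCombination ℂ y
  have hΦ : ∀ c, Φ c = ∑ a, c a • x a := fun c => rfl
  have hΨ : ∀ c, Ψ c = ∑ a, c a • y a := fun c => rfl
  have hinner : ∀ c : ιAB → ℂ, (inner ℂ (Φ c) (Φ c) : ℂ) = inner ℂ (Ψ c) (Ψ c) := by
    intro c
    rw [hΦ, hΨ]
    rw [sum_inner, sum_inner]
    refine Finset.sum_congr rfl fun a _ => ?_
    rw [inner_sum, inner_sum]
    refine Finset.sum_congr rfl fun b _ => ?_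
    rw [inner_smul_left, inner_smul_left, inner_smul_right, inner_smul_right, hgram]
  have hnorm : ∀ c : ιAB → ℂ, ‖Φ c‖ = ‖Ψ c‖ := by
    intro c
    rw [@norm_eq_sqrt_re_inner ℂ, @norm_eq_sqrt_re_inner ℂ, hinner]
  have hker : LinearMap.ker Φ ≤ LinearMap.ker Ψ := by
    intro c hc
    rw [LinearMap.mem_ker] at hc ⊢
    have := hnorm c
    rw [hc, norm_zero] at this
    exact norm_eq_zero.mp this.symm
  -- the isometry on the range of Φ
  let L0 : LinearMap.range Φ →ₗ[ℂ] EuclideanSpace ℂ E :=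
    ((LinearMap.ker Φ).liftQ Ψ hker).comp (Φ.quotKerEquivRange.symm : _ →ₗ[ℂ] _)
  have hL0 : ∀ c : ιAB → ℂ, ∀ h, L0 ⟨Φ c, h⟩ = Ψ c := by
    intro c h
    have h1 : Φ.quotKerEquivRange.symm ⟨Φ c, h⟩ = (LinearMap.ker Φ).mkQ c :=
      Φ.quotKerEquivRange_symm_apply_image c h
    show ((LinearMap.ker Φ).liftQ Ψ hker) (Φ.quotKerEquivRange.symm ⟨Φ c, h⟩) = Ψ c
    rw [h1]
    exact Submodule.liftQ_apply _ _ _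
  have hL0norm : ∀ s : LinearMap.range Φ, ‖L0 s‖ = ‖s‖ := by
    rintro ⟨s, hs⟩; obtain ⟨c, rfl⟩ := id hs
    rw [hL0 c, ← hnorm]
    rfl
  let L : LinearMap.range Φ →ₗᵢ[ℂ] EuclideanSpace ℂ E := ⟨L0, hL0norm⟩
  -- extend to a global isometry
  let U : EuclideanSpace ℂ E →ₗᵢ[ℂ] EuclideanSpace ℂ E := L.extend
  have hUx : ∀ a : ιAB, U (x a) = y a := by
    intro a
    have hxa : Φ (Pi.single a 1) = x a := by
      rw [hΦ]
      rw [Fintype.sum_eq_single a]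
      · simp
      · intro b hb; simp [Pi.single_apply, hb]
    have hmem : x a ∈ LinearMap.range Φ := ⟨Pi.single a 1, hxa⟩
    have : U ((⟨x a, hmem⟩ : LinearMap.range Φ) : EuclideanSpace ℂ E) = L ⟨x a, hmem⟩ :=
      L.extend_apply ⟨x a, hmem⟩
    rw [show ((⟨x a, hmem⟩ : LinearMap.range Φ) : EuclideanSpace ℂ E) = x a from rfl] at this
    rw [this]
    show L0 ⟨x a, hmem⟩ = y a
    have := hL0 (Pi.single a 1) (by rw [hxa]; exact hmem)
    simp_rw [hxa] at this
    rw [this, hΨ]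
    rw [Fintype.sum_eq_single a]
    · simp
    · intro b hb; simp [Pi.single_apply, hb]
  -- the isometry on the small space
  let W : EuclideanSpace ℂ E' →ₗ[ℂ] EuclideanSpace ℂ E := U.toLinearMap.comp J
  -- its matrix
  refine ⟨Matrix.of fun e e' => W (EuclideanSpace.single e' 1) e, ?_, ?_⟩
  · -- W applied to a vector via matrix
    ext e'' e'
    simp only [Matrix.mul_apply, Matrix.conjTranspose_apply, Matrix.one_apply, Matrix.of_apply]
    have : ∑ e : E, star (W (EuclideanSpace.single e'' 1) e) * W (EuclideanSpace.single e' 1) e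
        = (inner ℂ (W (EuclideanSpace.single e'' 1)) (W (EuclideanSpace.single e' 1)) : ℂ) := by
      simp [PiLp.inner_apply, RCLike.inner_apply, mul_comm]
    rw [this]
    have hWin : ∀ v w : EuclideanSpace ℂ E', (inner ℂ (W v) (W w) : ℂ) = inner ℂ v w := by
      intro v w
      show (inner ℂ (U (J v)) (U (J w)) : ℂ) = inner ℂ v w
      rw [LinearIsometry.inner_map_map, hJ]
    rw [hWin]
    simp [PiLp.inner_apply, RCLike.inner_apply, EuclideanSpace.single_apply,
      _root_.Finset.sum_ite_eq' Finset.univ, eq_comm]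
  · intro a e
    have hx : (WithLp.toLp 2 (fun e' => ψ (a, e')) : EuclideanSpace ℂ E')
        = ∑ e' : E', ψ (a, e') • EuclideanSpace.single e' 1 := by
      ext e''
      rw [WithLp.ofLp_sum, Finset.sum_apply]
      simp [EuclideanSpace.single_apply, _root_.Finset.sum_ite_eq' Finset.univ]
    have h1 : W (WithLp.toLp 2 (fun e' => ψ (a, e'))) = y a := by
      show U (J (WithLp.toLp 2 (fun e' => ψ (a, e')))) = y a
      exact hUx a
    calc (∑ e' : E', W (EuclideanSpace.single e' 1) e * ψ (a, e'))
        = (∑ e' : E', ψ (a, e') • W (EuclideanSpace.single e' 1)) e := by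
          rw [WithLp.ofLp_sum, Finset.sum_apply]
          refine Finset.sum_congr rfl fun e' _ => ?_
          rw [PiLp.smul_apply, smul_eq_mul, mul_comm]
      _ = W (∑ e' : E', ψ (a, e') • EuclideanSpace.single e' 1) e := by
          rw [map_sum]
          simp_rw [_root_.map_smul]
      _ = W (WithLp.toLp 2 (fun e' => ψ (a, e'))) e := by rw [← hx]
      _ = τ (a, e) := by rw [h1]
end

section
/- For a pure state ψ_{ABE'} purifying σ_{AB}, and the state ζ_{ABE'} = D_A(ψ_{ABE'}) obtained by completely dephasing system A, the private information equals the coherent information of the bipartite marginal: I(ζ_{AB}) − I(ζ_{AE'}) = S(σ_B) − S(σ_{AB}), where I denotes quantum mutual information I(ρ_{XY}) = S(ρ_X) + S(ρ_Y) − S(ρ_{XY}). -/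
open Matrix Finset

/-- Von Neumann entropy `S(ρ) = −Σ λ_i log λ_i` via eigenvalues. -/
noncomputable def vN {n : Type*} [Fintype n] [DecidableEq n] (ρ : Matrix n n ℂ) : ℝ :=
  if h : ρ.IsHermitian then ∑ i, Real.negMulLog (h.eigenvalues i) else 0

section AuxSpec
open Polynomial

lemma charfun_eq {n : Type*} [Fintype n] [DecidableEq n] {A : Matrix n n ℂ}
    (hA : A.IsHermitian) (x : ℂ) :
    det (x • (1 : Matrix n n ℂ) - A) = ∏ i, (x - (hA.eigenvalues i : ℂ)) := by
  have hU : (hA.eigenvectorUnitary : Matrix n n ℂ) *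
      star (hA.eigenvectorUnitary : Matrix n n ℂ) = 1 :=
    (Matrix.mem_unitaryGroup_iff).mp hA.eigenvectorUnitary.2
  have key : x • (1 : Matrix n n ℂ) - A
      = (hA.eigenvectorUnitary : Matrix n n ℂ)
        * (x • 1 - diagonal (RCLike.ofReal ∘ hA.eigenvalues))
        * star (hA.eigenvectorUnitary : Matrix n n ℂ) := by
    rw [Matrix.mul_sub, Matrix.sub_mul, ← Unitary.conjStarAlgAut_apply (S := ℂ) (x := diagonal (RCLike.ofReal ∘ hA.eigenvalues)), ← hA.spectral_theorem]
    congr 1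
    simp [Matrix.mul_smul, Matrix.smul_mul, hU]
  rw [key, det_mul_right_comm, hU, one_mul]
  have hd : x • (1 : Matrix n n ℂ) - diagonal (RCLike.ofReal ∘ hA.eigenvalues)
      = diagonal (fun i => x - (hA.eigenvalues i : ℂ)) := by
    ext i j
    rcases eq_or_ne i j with h | h <;>
      simp [diagonal, h, Matrix.one_apply_ne, Function.comp]
  rw [hd, det_diagonal]

lemma roots_form {k : Type*} [Fintype k] [DecidableEq k] (f : k → ℝ) (c : ℕ) :
    ((X : ℂ[X]) ^ c * ∏ i, (X - C ((f i : ℂ)))).roots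
      = Multiset.replicate c 0 + (univ.val.map fun i => ((f i : ℝ) : ℂ)) := by
  have hprod : (∏ i : k, ((X : ℂ[X]) - C ((f i : ℂ))))
      = ((univ.val.map fun i => ((f i : ℝ) : ℂ)).map fun a => X - C a).prod := by
    rw [Multiset.map_map]; rfl
  rw [roots_mul, roots_pow, roots_X, hprod, roots_multiset_prod_X_sub_C,
    Multiset.nsmul_singleton]
  apply mul_ne_zero (pow_ne_zero _ X_ne_zero)
  exact (monic_prod_of_monic _ _ fun i _ => monic_X_sub_C _).ne_zero

lemma sum_negMulLog_of_multiset_eq {m n : Type*} [Fintype m] [Fintype n]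
    (μ : m → ℝ) (ν : n → ℝ) (cm cn : ℕ)
    (hroots : Multiset.replicate cn (0 : ℂ) + (univ.val.map fun i => ((μ i : ℝ) : ℂ))
      = Multiset.replicate cm 0 + (univ.val.map fun j => ((ν j : ℝ) : ℂ))) :
    ∑ i, Real.negMulLog (μ i) = ∑ j, Real.negMulLog (ν j) := by
  have hsum := congrArg (fun s : Multiset ℂ =>
    (s.map fun z : ℂ => Real.negMulLog z.re).sum) hroots
  simp only [Multiset.map_add, Multiset.sum_add, Multiset.map_replicate, Complex.zero_re,
    Real.negMulLog_zero, Multiset.sum_replicate, smul_zero, zero_add,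
    Multiset.map_map, Function.comp_apply, Complex.ofReal_re] at hsum
  rw [Finset.sum_eq_multiset_sum, Finset.sum_eq_multiset_sum]
  exact hsum

lemma vN_mul_conjTranspose_transpose {m n : Type*} [Fintype m] [DecidableEq m]
    [Fintype n] [DecidableEq n] (M : Matrix m n ℂ) :
    vN (M * Mᴴ) = vN (Mᵀ * Mᵀᴴ) := by
  have h1 : (M * Mᴴ).IsHermitian := isHermitian_mul_conjTranspose_self M
  have h2 : (Mᵀ * Mᵀᴴ).IsHermitian := isHermitian_mul_conjTranspose_self Mᵀ
  -- transpose trick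
  have c3 : ∀ x : ℂ, det (x • (1 : Matrix n n ℂ) - Mᵀ * Mᵀᴴ)
      = det (x • (1 : Matrix n n ℂ) - Mᴴ * M) := by
    intro x
    rw [← det_transpose (x • (1 : Matrix n n ℂ) - Mᴴ * M)]
    congr 1
    rw [transpose_sub, transpose_smul, transpose_one, transpose_mul]
    congr 1
  -- Weinstein–Aronszajn
  have key : ∀ x : ℂ, x ≠ 0 →
      x ^ Fintype.card n * det (x • (1 : Matrix m m ℂ) - M * Mᴴ)
        = x ^ Fintype.card m * det (x • (1 : Matrix n n ℂ) - Mᴴ * M) := by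
    intro x hx
    have e1 : x • (1 : Matrix m m ℂ) - M * Mᴴ = x • (1 + (-x⁻¹) • (M * Mᴴ)) := by
      rw [smul_add, smul_smul, mul_neg, mul_inv_cancel₀ hx, neg_one_smul, sub_eq_add_neg]
    have e2 : (1 : Matrix n n ℂ) + (-x⁻¹) • (Mᴴ * M) = x⁻¹ • (x • 1 - Mᴴ * M) := by
      rw [smul_sub, smul_smul, inv_mul_cancel₀ hx, one_smul, neg_smul, sub_eq_add_neg]
    have e3 : (1 : Matrix m m ℂ) + (-x⁻¹) • (M * Mᴴ)
        = 1 + M * ((-x⁻¹) • Mᴴ) := by rw [Matrix.mul_smul]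
    have e4 : (1 : Matrix n n ℂ) + ((-x⁻¹) • Mᴴ) * M
        = 1 + (-x⁻¹) • (Mᴴ * M) := by rw [Matrix.smul_mul]
    calc x ^ Fintype.card n * det (x • (1 : Matrix m m ℂ) - M * Mᴴ)
        = x ^ Fintype.card n * (x ^ Fintype.card m *
            det (1 + M * ((-x⁻¹) • Mᴴ))) := by rw [e1, det_smul, e3]
      _ = x ^ Fintype.card n * (x ^ Fintype.card m *
            det ((1 : Matrix n n ℂ) + (-x⁻¹) • (Mᴴ * M))) := by
            rw [det_one_add_mul_comm, e4]
      _ = x ^ Fintype.card m * (x ^ Fintype.card n * ((x⁻¹) ^ Fintype.card n *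
            det (x • (1 : Matrix n n ℂ) - Mᴴ * M))) := by rw [e2, det_smul]; ring
      _ = x ^ Fintype.card m * det (x • (1 : Matrix n n ℂ) - Mᴴ * M) := by
            rw [← mul_assoc (x ^ Fintype.card n), ← mul_pow, mul_inv_cancel₀ hx,
              one_pow, one_mul]
  -- polynomial identity
  have hPQ : (X : ℂ[X]) ^ Fintype.card n * ∏ i, (X - C ((h1.eigenvalues i : ℝ) : ℂ))
      = (X : ℂ[X]) ^ Fintype.card m * ∏ j, (X - C ((h2.eigenvalues j : ℝ) : ℂ)) := by
    apply eq_of_infinite_eval_eq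
    apply Set.Infinite.mono (s := {(0 : ℂ)}ᶜ)
    · intro x hx
      have hx0 : x ≠ 0 := hx
      simp only [Set.mem_setOf_eq, eval_mul, eval_pow, eval_X, eval_prod,
        eval_sub, eval_C]
      rw [← charfun_eq h1, ← charfun_eq h2, c3]
      exact key x hx0
    · exact Set.Finite.infinite_compl (Set.finite_singleton 0)
  have hroots : Multiset.replicate (Fintype.card n) (0 : ℂ)
        + (univ.val.map fun i => ((h1.eigenvalues i : ℝ) : ℂ))
      = Multiset.replicate (Fintype.card m) 0
        + (univ.val.map fun j => ((h2.eigenvalues j : ℝ) : ℂ)) := by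
    rw [← roots_form h1.eigenvalues (Fintype.card n),
      ← roots_form h2.eigenvalues (Fintype.card m)]
    exact congrArg Polynomial.roots hPQ
  rw [vN, vN, dif_pos h1, dif_pos h2]
  exact sum_negMulLog_of_multiset_eq _ _ _ _ hroots

end AuxSpec

section
variable {A B E : Type*} [Fintype A] [DecidableEq A] [Fintype B] [DecidableEq B]
  [Fintype E] [DecidableEq E]

/-- The state `ζ = D_A(|ψ⟩⟨ψ|)` obtained by completely dephasing system `A` of the pure
state `|ψ⟩ ∈ H_A ⊗ H_B ⊗ H_{E'}`. -/
noncomputable def dephasedPure (ψ : A × B × E → ℂ) :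
    Matrix (A × B × E) (A × B × E) ℂ :=
  Matrix.of fun p q => if p.1 = q.1 then ψ p * star (ψ q) else 0

/-- Marginal `ρ_{AB}` of an operator on `A ⊗ B ⊗ E`. -/
noncomputable def redAB (ρ : Matrix (A × B × E) (A × B × E) ℂ) : Matrix (A × B) (A × B) ℂ :=
  Matrix.of fun p q => ∑ e, ρ (p.1, p.2, e) (q.1, q.2, e)

/-- Marginal `ρ_{AE}`. -/
noncomputable def redAE (ρ : Matrix (A × B × E) (A × B × E) ℂ) : Matrix (A × E) (A × E) ℂ :=
  Matrix.of fun p q => ∑ b, ρ (p.1, b, p.2) (q.1, b, q.2)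

/-- Marginal `ρ_A`. -/
noncomputable def redA (ρ : Matrix (A × B × E) (A × B × E) ℂ) : Matrix A A ℂ :=
  Matrix.of fun a a' => ∑ b, ∑ e, ρ (a, b, e) (a', b, e)

/-- Marginal `ρ_B`. -/
noncomputable def redB (ρ : Matrix (A × B × E) (A × B × E) ℂ) : Matrix B B ℂ :=
  Matrix.of fun b b' => ∑ a, ∑ e, ρ (a, b, e) (a, b', e)

/-- Marginal `ρ_E`. -/
noncomputable def redE (ρ : Matrix (A × B × E) (A × B × E) ℂ) : Matrix E E ℂ :=
  Matrix.of fun e e' => ∑ a, ∑ b, ρ (a, b, e) (a, b, e')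

/-- For a pure state `ψ_{ABE'}` purifying `σ_{AB}` and `ζ = D_A(ψ)`, the private
information equals the coherent information of the bipartite marginal:
`I(ζ_{AB}) − I(ζ_{AE'}) = S(σ_B) − S(σ_{AB})`, with
`I(ρ_{XY}) = S(ρ_X) + S(ρ_Y) − S(ρ_{XY})` the quantum mutual information. -/
theorem private_info_eq_coherent_info (ψ : A × B × E → ℂ)
    (hψ : ∑ p, star (ψ p) * ψ p = 1) :
    (vN (redA (dephasedPure ψ)) + vN (redB (dephasedPure ψ)) - vN (redAB (dephasedPure ψ)))
      - (vN (redA (dephasedPure ψ)) + vN (redE (dephasedPure ψ)) - vN (redAE (dephasedPure ψ)))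
      = vN (redB (Matrix.of fun p q => ψ p * star (ψ q)))
        - vN (redAB (Matrix.of fun p q => ψ p * star (ψ q))) := by
  classical
  set σ : Matrix (A × B × E) (A × B × E) ℂ := Matrix.of fun p q => ψ p * star (ψ q) with hσ
  set M : Matrix E (A × B) ℂ := Matrix.of fun (e : E) (p : A × B) => ψ (p.1, p.2, e) with hM
  set N : Matrix (A × B) (A × E) ℂ := Matrix.of fun (p : A × B) (r : A × E) =>
    if p.1 = r.1 then ψ (p.1, p.2, r.2) else 0 with hN
  have hB : redB (dephasedPure ψ) = redB σ := by
    ext b b'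
    simp [redB, dephasedPure, hσ]
  have hEz : redE (dephasedPure ψ) = redE σ := by
    ext e e'
    simp [redE, dephasedPure, hσ]
  have hEσ : redE σ = M * Mᴴ := by
    ext e e'
    simp [redE, Matrix.mul_apply, Fintype.sum_prod_type, hσ, hM]
  have hABσ : redAB σ = Mᵀ * Mᵀᴴ := by
    ext p q
    simp [redAB, Matrix.mul_apply, hσ, hM]
  have hABz : redAB (dephasedPure ψ) = N * Nᴴ := by
    ext ⟨pa, pb⟩ ⟨qa, qb⟩
    rcases eq_or_ne pa qa with h | h
    · subst h
      simp [redAB, dephasedPure, Matrix.mul_apply, Fintype.sum_prod_type,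
        apply_ite (star : ℂ → ℂ), ite_mul, mul_ite, Finset.sum_ite_eq, hN]
    · simp [redAB, dephasedPure, Matrix.mul_apply, Fintype.sum_prod_type,
        apply_ite (star : ℂ → ℂ), ite_mul, mul_ite, Finset.sum_ite_eq, h, Ne.symm h, hN]
  have hAEz : redAE (dephasedPure ψ) = Nᵀ * Nᵀᴴ := by
    ext ⟨ra, re⟩ ⟨ra', re'⟩
    rcases eq_or_ne ra ra' with h | h
    · subst h
      simp [redAE, dephasedPure, Matrix.mul_apply, Fintype.sum_prod_type,
        apply_ite (star : ℂ → ℂ), ite_mul, mul_ite, Finset.sum_ite_eq, hN]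
    · simp [redAE, dephasedPure, Matrix.mul_apply, Fintype.sum_prod_type,
        apply_ite (star : ℂ → ℂ), ite_mul, mul_ite, Finset.sum_ite_eq, h, Ne.symm h, hN]
  have e1 : vN (redE σ) = vN (redAB σ) := by
    rw [hEσ, hABσ]
    exact vN_mul_conjTranspose_transpose M
  have e2 : vN (redAB (dephasedPure ψ)) = vN (redAE (dephasedPure ψ)) := by
    rw [hABz, hAEz]
    exact vN_mul_conjTranspose_transpose N
  rw [hB, hEz]
  linarith


end
end
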